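/- Let d ≥ 2 and μ > −1/2. For 0 ≤ m ≤ n and 1 ≤ ℓ ≤ dim H_m^d, define S_{m,ℓ}^n(x,t) := C_{n−m}^{(μ, m+(d−1)/2)}(t) · Y_ℓ^m(x). Then these functions are mutually orthogonal on the surface of the double cone with respect to the weight (1−t²)^{μ−1/2}: for (n,m,ℓ) ≠ (n',m',ℓ'), ∫_{−1}^1 |t|^{d−1} (∫_{S^{d−1}} S_{m,ℓ}^n(|t|ξ, t) S_{m',ℓ'}^{n'}(|t|ξ, t) dσ(ξ)) (1−t²)^{μ−1/2} dt = 0, while the integral is strictly positive when (n,m,ℓ) = (n',m',ℓ'). -/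
import Mathlib


open MeasureTheory MvPolynomial Real

noncomputable section

/-- The surface measure `dσ` on the unit sphere `S^{d−1} ⊆ ℝ^d`. -/
def sphMeas (d : ℕ) : Measure (Metric.sphere (0 : EuclideanSpace ℝ (Fin d)) 1) :=
  (volume : Measure (EuclideanSpace ℝ (Fin d))).toSphere

/-- The surface area `ω_d` of the unit sphere `S^{d−1} ⊆ ℝ^d`. -/
def sphArea (d : ℕ) : ℝ := ((sphMeas d) Set.univ).toReal

/-- The Laplace operator on polynomials in `d` variables. -/
def laplacianLM (d : ℕ) : MvPolynomial (Fin d) ℝ →ₗ[ℝ] MvPolynomial (Fin d) ℝ :=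
  ∑ i : Fin d, ((MvPolynomial.pderiv i).toLinearMap ∘ₗ (MvPolynomial.pderiv i).toLinearMap)

/-- `dim H_m^d`, the dimension of the space of spherical harmonics of degree `m`. -/
def harmDim (d m : ℕ) : ℕ :=
  Module.finrank ℝ
    ↥(MvPolynomial.homogeneousSubmodule (Fin d) ℝ m ⊓ LinearMap.ker (laplacianLM d))

/-- `p` is a generalized Gegenbauer polynomial `C_n^{(μ,ν)}`: it has degree `n` and is
orthogonal to all lower degrees with respect to `|t|^{2ν} (1−t²)^{μ−1/2}` on `(−1,1)`. -/
def IsGenGegenbauer (μ ν : ℝ) (n : ℕ) (p : Polynomial ℝ) : Prop :=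
  p.degree = n ∧ ∀ k < n,
    ∫ t in Set.Ioo (-1 : ℝ) 1,
      p.eval t * t ^ k * |t| ^ (2 * ν) * (1 - t ^ 2) ^ (μ - 1 / 2) = 0


lemma homog_eval_smul {d : ℕ} (p : MvPolynomial (Fin d) ℝ) {m : ℕ}
    (hp : p.IsHomogeneous m) (c : ℝ) (x : Fin d → ℝ) :
    MvPolynomial.eval (c • x) p = c ^ m * MvPolynomial.eval x p := by
  rw [eval_eq, eval_eq, Finset.mul_sum]
  refine Finset.sum_congr rfl fun s hs => ?_
  have hw := hp (MvPolynomial.mem_support_iff.mp hs)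
  have hdeg : (∑ i ∈ s.support, s i) = m := by
    rw [← hw, Finsupp.weight_apply]
    simp [Finsupp.sum]
  calc MvPolynomial.coeff s p * ∏ i ∈ s.support, (c • x) i ^ s i
      = MvPolynomial.coeff s p * ∏ i ∈ s.support, (c ^ s i * x i ^ s i) := by
        simp [mul_pow]
    _ = c ^ m * (MvPolynomial.coeff s p * ∏ i ∈ s.support, x i ^ s i) := by
        rw [Finset.prod_mul_distrib, Finset.prod_pow_eq_pow_sum, hdeg]
        ring


open Set in
lemma rpow_le_K {b x : ℝ} (h1 : 1 ≤ x) (h2 : x ≤ 2) : x ^ b ≤ max 1 (2 ^ b) := by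
  rcases le_or_gt 0 b with hb | hb
  · exact le_trans (Real.rpow_le_rpow (by linarith) h2 hb) (le_max_right _ _)
  · exact le_trans (Real.rpow_le_one_of_one_le_of_nonpos h1 hb.le) (le_max_left _ _)

open Set in
lemma weight_integrable {b : ℝ} (hb : -1 < b) :
    IntegrableOn (fun t : ℝ => (1 - t ^ 2) ^ b) (Ioo (-1 : ℝ) 1) volume := by
  have h1 : IntegrableOn (fun t : ℝ => (1 - t) ^ b) (Ioo (-1 : ℝ) 1) volume := by
    have h := ((intervalIntegral.intervalIntegrable_rpow' (a := 0) (b := 2) hb).comp_sub_left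
      1).def'
    refine h.mono_set ?_
    rw [show (1:ℝ)-0 = 1 by norm_num, show (1:ℝ)-2 = -1 by norm_num, Set.uIoc_comm,
      Set.uIoc_of_le (by norm_num : (-1:ℝ) ≤ 1)]
    exact Ioo_subset_Ioc_self
  have h2 : IntegrableOn (fun t : ℝ => (1 + t) ^ b) (Ioo (-1 : ℝ) 1) volume := by
    have h := ((intervalIntegral.intervalIntegrable_rpow' (a := 0) (b := 2) hb).comp_add_left
      1).def'
    refine h.mono_set ?_
    rw [show (0:ℝ)-1 = -1 by norm_num, show (2:ℝ)-1 = 1 by norm_num,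
      Set.uIoc_of_le (by norm_num : (-1:ℝ) ≤ 1)]
    exact Ioo_subset_Ioc_self
  set K : ℝ := max 1 (2 ^ b) with hK
  have hK0 : (0:ℝ) ≤ K := le_trans zero_le_one (le_max_left _ _)
  refine Integrable.mono' (((h1.add h2).smul K)) ?_ ?_
  · have hw : ContinuousOn (fun t : ℝ => (1 - t ^ 2) ^ b) (Ioo (-1:ℝ) 1) := by
      apply ContinuousOn.rpow_const (by fun_prop)
      intro t ht
      left
      nlinarith [ht.1, ht.2]
    exact hw.aestronglyMeasurable measurableSet_Ioo
  · rw [ae_restrict_iff' measurableSet_Ioo]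
    filter_upwards with t ht
    have h1t : (0:ℝ) < 1 - t := by linarith [ht.2]
    have h2t : (0:ℝ) < 1 + t := by linarith [ht.1]
    have hfac : (1 - t ^ 2 : ℝ) = (1 - t) * (1 + t) := by ring
    have hnn : (0:ℝ) ≤ (1 - t ^ 2) ^ b := Real.rpow_nonneg (by nlinarith) _
    rw [Real.norm_of_nonneg hnn, hfac, Real.mul_rpow h1t.le h2t.le]
    have hs1 : (0:ℝ) ≤ (1 - t) ^ b := Real.rpow_nonneg h1t.le _
    have hs2 : (0:ℝ) ≤ (1 + t) ^ b := Real.rpow_nonneg h2t.le _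
    simp only [Pi.smul_apply, Pi.add_apply, smul_eq_mul]
    rcases le_or_gt 0 t with htt | htt
    · have : (1 + t) ^ b ≤ K := rpow_le_K (by linarith) (by linarith [ht.2])
      nlinarith
    · have : (1 - t) ^ b ≤ K := rpow_le_K (by linarith) (by linarith [ht.1])
      nlinarith

-- continuous function times weight is integrable
open Set in
lemma cont_mul_weight_integrable {b : ℝ} (hb : -1 < b) {g : ℝ → ℝ} (hg : Continuous g) :
    IntegrableOn (fun t : ℝ => g t * (1 - t ^ 2) ^ b) (Ioo (-1 : ℝ) 1) volume := by
  obtain ⟨M, hM⟩ : ∃ M, ∀ t ∈ Icc (-1:ℝ) 1, |g t| ≤ M := by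
    obtain ⟨M, hM⟩ := (isCompact_Icc (a := (-1:ℝ)) (b := 1)).exists_bound_of_continuousOn
      hg.continuousOn
    exact ⟨M, fun t ht => by simpa using hM t ht⟩
  have hM0 : (0:ℝ) ≤ M := le_trans (abs_nonneg _) (hM 0 (by norm_num))
  refine Integrable.mono' ((weight_integrable hb).smul M) ?_ ?_
  · have hw : ContinuousOn (fun t : ℝ => (1 - t ^ 2) ^ b) (Ioo (-1:ℝ) 1) := by
      apply ContinuousOn.rpow_const (by fun_prop)
      intro t ht
      left
      nlinarith [ht.1, ht.2]
    exact (hg.continuousOn.mul hw).aestronglyMeasurable measurableSet_Ioo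
  · rw [ae_restrict_iff' measurableSet_Ioo]
    filter_upwards with t ht
    have hnn : (0:ℝ) ≤ (1 - t ^ 2) ^ b := Real.rpow_nonneg (by nlinarith [ht.1, ht.2]) _
    simp only [Pi.smul_apply, smul_eq_mul]
    rw [Real.norm_eq_abs, abs_mul, abs_of_nonneg hnn]
    exact mul_le_mul_of_nonneg_right (hM t ⟨ht.1.le, ht.2.le⟩) hnn

open Set in
lemma gegen_orth {μ : ℝ} (hμ : (-1:ℝ) < μ - 1/2) (N : ℕ) {k : ℕ} {p q : Polynomial ℝ}
    (hp : ∀ j < k, ∫ t in Set.Ioo (-1:ℝ) 1,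
        p.eval t * t ^ j * |t| ^ N * (1 - t ^ 2) ^ (μ - 1/2) = 0)
    (hq : q.natDegree < k) :
    ∫ t in Set.Ioo (-1:ℝ) 1,
        p.eval t * q.eval t * |t| ^ N * (1 - t ^ 2) ^ (μ - 1/2) = 0 := by
  have key : ∀ t : ℝ, p.eval t * q.eval t * |t| ^ N * (1 - t ^ 2) ^ (μ - 1/2)
      = ∑ j ∈ Finset.range k,
          q.coeff j * (p.eval t * t ^ j * |t| ^ N * (1 - t ^ 2) ^ (μ - 1/2)) := by
    intro t
    rw [Polynomial.eval_eq_sum_range' hq, Finset.mul_sum, Finset.sum_mul, Finset.sum_mul]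
    exact Finset.sum_congr rfl fun j _ => by ring
  simp only [key]
  rw [integral_finset_sum]
  · refine Finset.sum_eq_zero fun j _ => ?_
    rw [MeasureTheory.integral_const_mul, hp j (Finset.mem_range.mp ‹j ∈ Finset.range k›), mul_zero]
  · intro j _
    exact (cont_mul_weight_integrable hμ
      (((Polynomial.continuous p).mul (continuous_pow j)).mul (continuous_abs.pow N))).const_mul _

open Set in
lemma gegen_pos {μ : ℝ} (hμ : (-1:ℝ) < μ - 1/2) (N : ℕ) {p : Polynomial ℝ} (hp : p ≠ 0) :
    0 < ∫ t in Set.Ioo (-1:ℝ) 1,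
        p.eval t ^ 2 * |t| ^ N * (1 - t ^ 2) ^ (μ - 1/2) := by
  have hint : IntegrableOn
      (fun t : ℝ => p.eval t ^ 2 * |t| ^ N * (1 - t ^ 2) ^ (μ - 1/2)) (Ioo (-1:ℝ) 1) volume := by
    have := cont_mul_weight_integrable hμ
      (g := fun t : ℝ => p.eval t ^ 2 * |t| ^ N)
      (((Polynomial.continuous p).pow 2).mul (continuous_abs.pow N))
    exact this
  have hnn : 0 ≤ᵐ[volume.restrict (Ioo (-1:ℝ) 1)]
      fun t : ℝ => p.eval t ^ 2 * |t| ^ N * (1 - t ^ 2) ^ (μ - 1/2) := by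
    refine (ae_restrict_iff' measurableSet_Ioo).mpr (Filter.Eventually.of_forall fun t ht => ?_)
    have : (0:ℝ) ≤ (1 - t ^ 2) ^ (μ - 1/2) := Real.rpow_nonneg (by nlinarith [ht.1, ht.2]) _
    positivity
  rw [setIntegral_pos_iff_support_of_nonneg_ae hnn hint]
  have hZ : ({t : ℝ | Polynomial.IsRoot p t} ∪ {0}).Finite :=
    (Polynomial.finite_setOf_isRoot hp).union (Set.finite_singleton 0)
  have hsub : Ioo (-1:ℝ) 1 \ ({t : ℝ | Polynomial.IsRoot p t} ∪ {0}) ⊆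
      (Function.support fun t : ℝ => p.eval t ^ 2 * |t| ^ N * (1 - t ^ 2) ^ (μ - 1/2))
        ∩ Ioo (-1:ℝ) 1 := by
    rintro t ⟨ht, htZ⟩
    refine ⟨?_, ht⟩
    have h1 : p.eval t ≠ 0 := fun h => htZ (Or.inl h)
    have h2 : t ≠ 0 := fun h => htZ (Or.inr h)
    have h3 : (0:ℝ) < (1 - t ^ 2) ^ (μ - 1/2) := Real.rpow_pos_of_pos (by nlinarith [ht.1, ht.2]) _
    have h4 : (0:ℝ) < |t| ^ N := pow_pos (abs_pos.mpr h2) N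
    simp only [Function.mem_support]
    positivity
  calc (0:ENNReal) < volume (Ioo (-1:ℝ) 1 \ ({t : ℝ | Polynomial.IsRoot p t} ∪ {0})) := by
        rw [measure_diff_null (hZ.measure_zero volume)]
        simp [Real.volume_Ioo]
    _ ≤ _ := measure_mono hsub

/-- For `d ≥ 2` and `μ > −1/2`, the functions
`S_{m,ℓ}^n(x,t) = C_{n−m}^{(μ, m+(d−1)/2)}(t) Y_ℓ^m(x)` are mutually orthogonal on the
surface of the double cone with respect to the weight `(1−t²)^{μ−1/2}`, with strictly
positive norms. -/
theorem double_cone_surface_orthogonality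
    (d : ℕ) (hd : 2 ≤ d) (μ : ℝ) (hμ : -(1 / 2 : ℝ) < μ)
    -- the generalized Gegenbauer polynomials
    (C : ℕ → ℝ → ℝ → Polynomial ℝ)
    (hC : ∀ (j : ℕ) (μ' ν' : ℝ), -(1 / 2 : ℝ) < μ' → -(1 / 2 : ℝ) < ν' →
      IsGenGegenbauer μ' ν' j (C j μ' ν'))
    -- an orthonormal basis of spherical harmonics `Y_ℓ^m`, `1 ≤ ℓ ≤ dim H_m^d`
    (Y : ℕ → ℕ → MvPolynomial (Fin d) ℝ)
    (hYhom : ∀ m ℓ, ℓ ∈ Finset.Icc 1 (harmDim d m) → (Y m ℓ).IsHomogeneous m)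
    (hYharm : ∀ m ℓ, ℓ ∈ Finset.Icc 1 (harmDim d m) → laplacianLM d (Y m ℓ) = 0)
    (hYorth : ∀ m ℓ m' ℓ', ℓ ∈ Finset.Icc 1 (harmDim d m) →
      ℓ' ∈ Finset.Icc 1 (harmDim d m') →
      (sphArea d)⁻¹ *
        ∫ ξ : Metric.sphere (0 : EuclideanSpace ℝ (Fin d)) 1,
          MvPolynomial.eval (ξ : EuclideanSpace ℝ (Fin d)) (Y m ℓ) *
          MvPolynomial.eval (ξ : EuclideanSpace ℝ (Fin d)) (Y m' ℓ') ∂(sphMeas d) =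
        if m = m' ∧ ℓ = ℓ' then 1 else 0) :
    ∀ n m ℓ n' m' ℓ' : ℕ, m ≤ n → ℓ ∈ Finset.Icc 1 (harmDim d m) →
      m' ≤ n' → ℓ' ∈ Finset.Icc 1 (harmDim d m') →
      (((n, m, ℓ) ≠ (n', m', ℓ')) →
        ∫ t in Set.Ioo (-1 : ℝ) 1, (|t| ^ (d - 1) *
          (∫ ξ : Metric.sphere (0 : EuclideanSpace ℝ (Fin d)) 1,
            ((C (n - m) μ (m + (d - 1) / 2 : ℝ)).eval t *
              MvPolynomial.eval (|t| • (ξ : EuclideanSpace ℝ (Fin d))) (Y m ℓ)) *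
            ((C (n' - m') μ (m' + (d - 1) / 2 : ℝ)).eval t *
              MvPolynomial.eval (|t| • (ξ : EuclideanSpace ℝ (Fin d))) (Y m' ℓ'))
            ∂(sphMeas d))) * (1 - t ^ 2) ^ (μ - 1 / 2) = 0) ∧
      (0 < ∫ t in Set.Ioo (-1 : ℝ) 1, (|t| ^ (d - 1) *
          (∫ ξ : Metric.sphere (0 : EuclideanSpace ℝ (Fin d)) 1,
            ((C (n - m) μ (m + (d - 1) / 2 : ℝ)).eval t *
              MvPolynomial.eval (|t| • (ξ : EuclideanSpace ℝ (Fin d))) (Y m ℓ)) ^ 2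
            ∂(sphMeas d))) * (1 - t ^ 2) ^ (μ - 1 / 2)) := by
  intro n m ℓ n' m' ℓ' hmn hℓ hmn' hℓ'
  have hμ' : (-1:ℝ) < μ - 1/2 := by linarith
  -- positivity of the sphere area
  have hA0 : (0:ℝ) ≤ sphArea d := ENNReal.toReal_nonneg
  have h1 := hYorth m ℓ m ℓ hℓ hℓ
  rw [if_pos ⟨rfl, rfl⟩] at h1
  have hAne : sphArea d ≠ 0 := by
    intro h; rw [h] at h1; simp at h1
  have hA : (0:ℝ) < sphArea d := lt_of_le_of_ne hA0 (Ne.symm hAne)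
  -- the unnormalized orthogonality relation
  have hJ : ∀ m₁ ℓ₁ m₂ ℓ₂ : ℕ, ℓ₁ ∈ Finset.Icc 1 (harmDim d m₁) →
      ℓ₂ ∈ Finset.Icc 1 (harmDim d m₂) →
      (∫ ξ : Metric.sphere (0 : EuclideanSpace ℝ (Fin d)) 1,
        MvPolynomial.eval (ξ : EuclideanSpace ℝ (Fin d)) (Y m₁ ℓ₁) *
        MvPolynomial.eval (ξ : EuclideanSpace ℝ (Fin d)) (Y m₂ ℓ₂) ∂(sphMeas d)) =
      sphArea d * (if m₁ = m₂ ∧ ℓ₁ = ℓ₂ then 1 else 0) := by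
    intro m₁ ℓ₁ m₂ ℓ₂ h₁ h₂
    rw [← hYorth m₁ ℓ₁ m₂ ℓ₂ h₁ h₂, ← mul_assoc, mul_inv_cancel₀ hAne, one_mul]
  -- pointwise evaluation of the inner (spherical) integral
  have hinner : ∀ (n₁ m₁ ℓ₁ n₂ m₂ ℓ₂ : ℕ), ℓ₁ ∈ Finset.Icc 1 (harmDim d m₁) →
      ℓ₂ ∈ Finset.Icc 1 (harmDim d m₂) → ∀ t : ℝ,
      (∫ ξ : Metric.sphere (0 : EuclideanSpace ℝ (Fin d)) 1,
        ((C (n₁ - m₁) μ (m₁ + (d - 1) / 2 : ℝ)).eval t *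
          MvPolynomial.eval (|t| • (ξ : EuclideanSpace ℝ (Fin d))) (Y m₁ ℓ₁)) *
        ((C (n₂ - m₂) μ (m₂ + (d - 1) / 2 : ℝ)).eval t *
          MvPolynomial.eval (|t| • (ξ : EuclideanSpace ℝ (Fin d))) (Y m₂ ℓ₂))
        ∂(sphMeas d)) =
      sphArea d * (if m₁ = m₂ ∧ ℓ₁ = ℓ₂ then 1 else 0) *
        ((C (n₁ - m₁) μ (m₁ + (d - 1) / 2 : ℝ)).eval t *
         (C (n₂ - m₂) μ (m₂ + (d - 1) / 2 : ℝ)).eval t * |t| ^ (m₁ + m₂)) := by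
    intro n₁ m₁ ℓ₁ n₂ m₂ ℓ₂ h₁ h₂ t
    have step : ∀ ξ : Metric.sphere (0 : EuclideanSpace ℝ (Fin d)) 1,
        ((C (n₁ - m₁) μ (m₁ + (d - 1) / 2 : ℝ)).eval t *
          MvPolynomial.eval (|t| • (ξ : EuclideanSpace ℝ (Fin d))) (Y m₁ ℓ₁)) *
        ((C (n₂ - m₂) μ (m₂ + (d - 1) / 2 : ℝ)).eval t *
          MvPolynomial.eval (|t| • (ξ : EuclideanSpace ℝ (Fin d))) (Y m₂ ℓ₂)) =
        ((C (n₁ - m₁) μ (m₁ + (d - 1) / 2 : ℝ)).eval t *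
         (C (n₂ - m₂) μ (m₂ + (d - 1) / 2 : ℝ)).eval t * |t| ^ (m₁ + m₂)) *
        (MvPolynomial.eval (ξ : EuclideanSpace ℝ (Fin d)) (Y m₁ ℓ₁) *
         MvPolynomial.eval (ξ : EuclideanSpace ℝ (Fin d)) (Y m₂ ℓ₂)) := by
      intro ξ
      have e1 : MvPolynomial.eval (|t| • (ξ : EuclideanSpace ℝ (Fin d))) (Y m₁ ℓ₁) =
          |t| ^ m₁ * MvPolynomial.eval (ξ : EuclideanSpace ℝ (Fin d)) (Y m₁ ℓ₁) :=
        homog_eval_smul _ (hYhom _ _ h₁) _ _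
      have e2 : MvPolynomial.eval (|t| • (ξ : EuclideanSpace ℝ (Fin d))) (Y m₂ ℓ₂) =
          |t| ^ m₂ * MvPolynomial.eval (ξ : EuclideanSpace ℝ (Fin d)) (Y m₂ ℓ₂) :=
        homog_eval_smul _ (hYhom _ _ h₂) _ _
      rw [e1, e2, pow_add]
      ring
    simp only [step]
    rw [MeasureTheory.integral_const_mul, hJ m₁ ℓ₁ m₂ ℓ₂ h₁ h₂]
    ring
  -- squared version
  have hinner2 : ∀ t : ℝ,
      (∫ ξ : Metric.sphere (0 : EuclideanSpace ℝ (Fin d)) 1,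
        ((C (n - m) μ (m + (d - 1) / 2 : ℝ)).eval t *
          MvPolynomial.eval (|t| • (ξ : EuclideanSpace ℝ (Fin d))) (Y m ℓ)) ^ 2
        ∂(sphMeas d)) =
      sphArea d * ((C (n - m) μ (m + (d - 1) / 2 : ℝ)).eval t ^ 2 * |t| ^ (m + m)) := by
    intro t
    have step : ∀ ξ : Metric.sphere (0 : EuclideanSpace ℝ (Fin d)) 1,
        ((C (n - m) μ (m + (d - 1) / 2 : ℝ)).eval t *
          MvPolynomial.eval (|t| • (ξ : EuclideanSpace ℝ (Fin d))) (Y m ℓ)) ^ 2 =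
        ((C (n - m) μ (m + (d - 1) / 2 : ℝ)).eval t ^ 2 * |t| ^ (m + m)) *
        (MvPolynomial.eval (ξ : EuclideanSpace ℝ (Fin d)) (Y m ℓ) *
         MvPolynomial.eval (ξ : EuclideanSpace ℝ (Fin d)) (Y m ℓ)) := by
      intro ξ
      have e1 : MvPolynomial.eval (|t| • (ξ : EuclideanSpace ℝ (Fin d))) (Y m ℓ) =
          |t| ^ m * MvPolynomial.eval (ξ : EuclideanSpace ℝ (Fin d)) (Y m ℓ) :=
        homog_eval_smul _ (hYhom _ _ hℓ) _ _
      rw [e1, pow_add]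
      ring
    simp only [step]
    rw [MeasureTheory.integral_const_mul, hJ m ℓ m ℓ hℓ hℓ, if_pos ⟨rfl, rfl⟩]
    ring
  constructor
  · -- orthogonality
    intro hne
    simp only [hinner n m ℓ n' m' ℓ' hℓ hℓ']
    by_cases hmm : m = m' ∧ ℓ = ℓ'
    · obtain ⟨rfl, rfl⟩ := hmm
      have hnn' : n ≠ n' := by
        intro h; exact hne (by rw [h])
      rw [show (∫ t in Set.Ioo (-1:ℝ) 1, (|t| ^ (d-1) *
          (sphArea d * (if m = m ∧ ℓ = ℓ then (1:ℝ) else 0) *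
            ((C (n - m) μ (m + (d - 1) / 2 : ℝ)).eval t *
             (C (n' - m) μ (m + (d - 1) / 2 : ℝ)).eval t * |t| ^ (m + m)))) *
          (1 - t ^ 2) ^ (μ - 1/2)) =
        ∫ t in Set.Ioo (-1:ℝ) 1, sphArea d *
          ((C (n - m) μ (m + (d - 1) / 2 : ℝ)).eval t *
           (C (n' - m) μ (m + (d - 1) / 2 : ℝ)).eval t *
           |t| ^ ((d - 1) + (m + m)) * (1 - t ^ 2) ^ (μ - 1/2))
        from setIntegral_congr_fun measurableSet_Ioo fun t _ => by
          rw [if_pos ⟨rfl, rfl⟩, pow_add]; ring]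
      rw [MeasureTheory.integral_const_mul]
      apply mul_eq_zero_of_right
      -- now the genuine Gegenbauer orthogonality
      have hν : -(1/2 : ℝ) < (m + (d - 1) / 2 : ℝ) := by
        have h2 : (2:ℝ) ≤ d := by exact_mod_cast hd
        have h0 : (0:ℝ) ≤ (m:ℝ) := Nat.cast_nonneg m
        linarith
      have hconv : ∀ t : ℝ, |t| ^ (2 * ((m : ℝ) + ((d:ℝ) - 1) / 2)) =
          |t| ^ ((d - 1) + (m + m) : ℕ) := by
        intro t
        rw [show 2 * ((m : ℝ) + ((d:ℝ) - 1) / 2) = (((d - 1) + (m + m) : ℕ) : ℝ) by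
          push_cast [Nat.cast_sub (show 1 ≤ d by omega)]; ring, Real.rpow_natCast]
      have hP := hC (n - m) μ (m + (d - 1) / 2 : ℝ) hμ hν
      have hQ := hC (n' - m) μ (m + (d - 1) / 2 : ℝ) hμ hν
      have hPdeg : (C (n - m) μ (m + (d - 1) / 2 : ℝ)).natDegree = n - m :=
        Polynomial.natDegree_eq_of_degree_eq_some hP.1
      have hQdeg : (C (n' - m) μ (m + (d - 1) / 2 : ℝ)).natDegree = n' - m :=
        Polynomial.natDegree_eq_of_degree_eq_some hQ.1
      have hp' : ∀ j < n - m, ∫ t in Set.Ioo (-1:ℝ) 1,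
          (C (n - m) μ (m + (d - 1) / 2 : ℝ)).eval t * t ^ j *
            |t| ^ ((d - 1) + (m + m) : ℕ) * (1 - t ^ 2) ^ (μ - 1/2) = 0 := by
        intro j hj
        have := hP.2 j hj
        simpa only [hconv] using this
      have hq' : ∀ j < n' - m, ∫ t in Set.Ioo (-1:ℝ) 1,
          (C (n' - m) μ (m + (d - 1) / 2 : ℝ)).eval t * t ^ j *
            |t| ^ ((d - 1) + (m + m) : ℕ) * (1 - t ^ 2) ^ (μ - 1/2) = 0 := by
        intro j hj
        have := hQ.2 j hj
        simpa only [hconv] using this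
      rcases lt_or_gt_of_ne (show n - m ≠ n' - m by omega) with hlt | hgt
      · -- n - m < n' - m : swap roles
        rw [show (∫ t in Set.Ioo (-1:ℝ) 1,
            (C (n - m) μ (m + (d - 1) / 2 : ℝ)).eval t *
            (C (n' - m) μ (m + (d - 1) / 2 : ℝ)).eval t *
            |t| ^ ((d - 1) + (m + m)) * (1 - t ^ 2) ^ (μ - 1/2)) =
          ∫ t in Set.Ioo (-1:ℝ) 1,
            (C (n' - m) μ (m + (d - 1) / 2 : ℝ)).eval t *
            (C (n - m) μ (m + (d - 1) / 2 : ℝ)).eval t *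
            |t| ^ ((d - 1) + (m + m)) * (1 - t ^ 2) ^ (μ - 1/2)
          from setIntegral_congr_fun measurableSet_Ioo fun t _ => by ring]
        exact gegen_orth hμ' _ hq' (by rw [hPdeg]; exact hlt)
      · exact gegen_orth hμ' _ hp' (by rw [hQdeg]; exact hgt)
    · rw [if_neg hmm]
      simp
  · -- positivity
    simp only [hinner2]
    have hν : -(1/2 : ℝ) < (m + (d - 1) / 2 : ℝ) := by
      have h2 : (2:ℝ) ≤ d := by exact_mod_cast hd
      have h0 : (0:ℝ) ≤ (m:ℝ) := Nat.cast_nonneg m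
      linarith
    have hP := hC (n - m) μ (m + (d - 1) / 2 : ℝ) hμ hν
    have hPne : C (n - m) μ (m + (d - 1) / 2 : ℝ) ≠ 0 := by
      intro h0
      have := hP.1
      rw [h0, Polynomial.degree_zero] at this
      simp at this
    rw [show (∫ t in Set.Ioo (-1:ℝ) 1, (|t| ^ (d-1) *
        (sphArea d * ((C (n - m) μ (m + (d - 1) / 2 : ℝ)).eval t ^ 2 * |t| ^ (m + m)))) *
        (1 - t ^ 2) ^ (μ - 1/2)) =
      ∫ t in Set.Ioo (-1:ℝ) 1, sphArea d *
        ((C (n - m) μ (m + (d - 1) / 2 : ℝ)).eval t ^ 2 *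
         |t| ^ ((d - 1) + (m + m)) * (1 - t ^ 2) ^ (μ - 1/2))
      from setIntegral_congr_fun measurableSet_Ioo fun t _ => by rw [pow_add]; ring]
    rw [MeasureTheory.integral_const_mul]
    exact mul_pos hA (gegen_pos hμ' _ hPne)
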